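/- For the full subword order on {a,b}* (Björner's theorem, special case recovered as d → ∞): for u ≤ w, the number of normal embeddings (w choose u)_n satisfies the recursion enabling μ: the alternating sum ∑_{u ≤ v ≤ w} (−1)^{|v|} (w choose v)_n = 0 whenever u < w, where (w choose v)_n counts embeddings of v in w containing the repetition set R(w). -/

import Mathlib

open List

/-- Words over the alphabet `{a,b}`: `true` encodes `a`, `false` encodes `b`. -/
abbrev Word := List Bool

/-- `s` is an embedding of `u` in `w`: listing the elements of `s` in increasing
order picks out the letters of `u` inside `w`. -/
def IsEmb (u w : Word) (s : Finset ℕ) : Prop :=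
  (s.sort (· ≤ ·)).map (fun i => w[i]?) = u.map some

/-- The repetition set `R(w) = {j ≥ 1 : w_j = w_{j-1}}` (0-based positions). -/
def RepSet (w : Word) : Finset ℕ :=
  (Finset.Ico 1 w.length).filter (fun j => w[j]? = w[j-1]?)

/-- `(w choose v)_n`: number of normal embeddings of `v` in `w`. -/
noncomputable def nCount (v w : Word) : ℕ :=
  Nat.card {s : Finset ℕ // IsEmb v w s ∧ RepSet w ⊆ s}

/-!
Grouping embeddings by their index set turns the sum into `∑ (-1)^|s|` over the sets
`R(w) ⊆ s ⊆ [0, |w|)` with `u ≤ w|_s`. For every `u` this signed count is `(-1)^|w|` if `u = w`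
and `0` otherwise, by induction on `w = w'c`. Splitting on whether the last position lies in `s`,
the count for `w` is the count for `w'` (this term is absent when `w'` ends in `c`, the last
position then being forced) minus the count of `s` with `u ≤ w'|_s c`. If `u = u'c`, the latter is
the count of `u'` in `w'`; otherwise the final `c` is useless to `u`, and the two terms cancel.
-/

theorem List.sublist_concat_iff_of_getLast?_ne {α : Type*} {u l : List α} {a : α}
    (hu : u.getLast? ≠ some a) : u <+ l ++ [a] ↔ u <+ l := by
  refine ⟨fun h => ?_, fun h => h.trans (sublist_append_left l [a])⟩
  obtain ⟨u₁, u₂, rfl, h₁, h₂⟩ := sublist_append_iff.1 h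
  rcases sublist_singleton.1 h₂ with rfl | rfl
  · rwa [append_nil]
  · exact absurd getLast?_concat hu

theorem Finset.sort_insert_of_forall_lt {α : Type*} [LinearOrder α] {s : Finset α} {n : α}
    (h : ∀ i ∈ s, i < n) : (insert n s).sort (· ≤ ·) = s.sort (· ≤ ·) ++ [n] := by
  have hn : n ∉ s := fun hn => (h n hn).false
  have hl : (s.sort (· ≤ ·) ++ [n]).Nodup :=
    (s.sort_nodup _).append (nodup_singleton n) (by simpa using hn)
  rw [← (List.toFinset_sort (· ≤ ·) hl).2]
  · rw [toFinset_append, Finset.sort_toFinset, toFinset_cons, toFinset_nil, insert_empty_eq,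
      Finset.union_singleton]
  · rw [pairwise_append]
    exact ⟨s.pairwise_sort _, pairwise_singleton _ _, by simpa using fun i hi => (h i hi).le⟩

namespace Word

/-- The subword `w|_s`; positions `≥ |w|` read as `false`. -/
def restrict (w : Word) (s : Finset ℕ) : Word :=
  (s.sort (· ≤ ·)).map (w.getD · false)

theorem length_restrict (w : Word) (s : Finset ℕ) : (restrict w s).length = s.card := by
  simp [restrict]

theorem map_some_restrict {w : Word} {s : Finset ℕ} (hs : s ⊆ Finset.range w.length) :
    (restrict w s).map some = (s.sort (· ≤ ·)).map (fun i => w[i]?) := by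
  rw [restrict, List.map_map]
  refine map_congr_left fun i hi => ?_
  have : i < w.length := Finset.mem_range.1 (hs ((Finset.mem_sort _).1 hi))
  simp [getElem?_eq_getElem this]

theorem subset_range_of_isEmb {v w : Word} {s : Finset ℕ} (h : IsEmb v w s) :
    s ⊆ Finset.range w.length := by
  intro i hi
  have : w[i]? ∈ v.map some := h ▸ mem_map_of_mem ((Finset.mem_sort _).2 hi)
  obtain ⟨_, -, hx⟩ := List.mem_map.1 this
  exact Finset.mem_range.2 (List.getElem?_eq_some_iff.1 hx.symm).1

theorem isEmb_iff {v w : Word} {s : Finset ℕ} :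
    IsEmb v w s ↔ s ⊆ Finset.range w.length ∧ restrict w s = v := by
  refine ⟨fun h => ⟨subset_range_of_isEmb h, ?_⟩, fun ⟨hs, h⟩ => ?_⟩
  · exact map_injective_iff.2 (Option.some_injective _) <|
      (map_some_restrict (subset_range_of_isEmb h)).trans h
  · rw [IsEmb, ← map_some_restrict hs, h]

theorem restrict_sublist {w : Word} {s : Finset ℕ} (hs : s ⊆ Finset.range w.length) :
    restrict w s <+ w := by
  have hsort : s.sort (· ≤ ·) <+ List.range w.length := by
    refine sublist_of_subperm_of_pairwise (r := (· < ·)) ?_ (Finset.sortedLT_sort s).pairwise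
      pairwise_lt_range
    exact subperm_of_subset (s.sort_nodup _) fun i hi => by
      simpa using hs ((Finset.mem_sort _).1 hi)
  have hw : (List.range w.length).map (w.getD · false) = w :=
    ext_getElem (by simp) fun i _ hi => by simp [getElem?_eq_getElem hi]
  exact (hsort.map _).trans (by rw [hw])

theorem restrict_concat {w : Word} {s : Finset ℕ} (c : Bool) (hs : s ⊆ Finset.range w.length) :
    restrict (w ++ [c]) s = restrict w s :=
  map_congr_left fun _ hi =>
    getD_append _ _ _ _ (Finset.mem_range.1 (hs ((Finset.mem_sort _).1 hi)))

theorem restrict_concat_insert {w : Word} {s : Finset ℕ} (c : Bool)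
    (hs : s ⊆ Finset.range w.length) :
    restrict (w ++ [c]) (insert w.length s) = restrict w s ++ [c] := by
  rw [restrict, Finset.sort_insert_of_forall_lt fun i hi => Finset.mem_range.1 (hs hi),
    map_append, ← restrict, restrict_concat c hs]
  simp

theorem repSet_subset_range (w : Word) : RepSet w ⊆ Finset.range w.length := fun _ hj =>
  Finset.mem_range.2 (Finset.mem_Ico.1 (Finset.mem_filter.1 hj).1).2

theorem mem_repSet_concat {w : Word} {c : Bool} {j : ℕ} :
    j ∈ RepSet (w ++ [c]) ↔ j ∈ RepSet w ∨ j = w.length ∧ w.getLast? = some c := by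
  simp only [RepSet, Finset.mem_filter, Finset.mem_Ico, length_append, length_singleton]
  rcases lt_trichotomy j w.length with hj | rfl | hj
  · rw [getElem?_append_left hj, getElem?_append_left (by omega)]
    simp only [hj.ne, false_and, or_false]
    exact and_congr_left' (by omega)
  · rw [getElem?_concat_length]
    constructor
    · rintro ⟨⟨h1, -⟩, h⟩
      rw [getElem?_append_left (by omega), ← getLast?_eq_getElem?] at h
      exact Or.inr ⟨rfl, h.symm⟩
    · rintro (h | ⟨-, h⟩)
      · omega
      · have hw : 0 < w.length := length_pos_iff.2 (by rintro rfl; simp at h)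
        rw [getElem?_append_left (by omega), ← getLast?_eq_getElem?]
        exact ⟨⟨hw, by omega⟩, h.symm⟩
  · omega

theorem repSet_concat_subset_iff {w : Word} {c : Bool} {s : Finset ℕ}
    (hs : s ⊆ Finset.range w.length) :
    RepSet (w ++ [c]) ⊆ s ↔ w.getLast? ≠ some c ∧ RepSet w ⊆ s := by
  refine ⟨fun h => ⟨fun hc => ?_, fun j hj => h (mem_repSet_concat.2 (.inl hj))⟩, ?_⟩
  · exact (Finset.mem_range.1 (hs (h (mem_repSet_concat.2 (.inr ⟨rfl, hc⟩))))).false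
  · rintro ⟨hc, h⟩ j hj
    rcases mem_repSet_concat.1 hj with hj | ⟨-, hj⟩
    exacts [h hj, absurd hj hc]

theorem repSet_concat_subset_insert_iff {w : Word} {c : Bool} {s : Finset ℕ} :
    RepSet (w ++ [c]) ⊆ insert w.length s ↔ RepSet w ⊆ s := by
  refine ⟨fun h j hj => ?_, fun h j hj => ?_⟩
  · rcases Finset.mem_insert.1 (h (mem_repSet_concat.2 (.inl hj))) with rfl | hj'
    exacts [absurd (repSet_subset_range w hj) Finset.notMem_range_self, hj']
  · rcases mem_repSet_concat.1 hj with hj | ⟨rfl, -⟩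
    exacts [Finset.mem_insert_of_mem (h hj), Finset.mem_insert_self _ _]

def normalSum (w : Word) (P : Word → Prop) [DecidablePred P] : ℤ :=
  ∑ s ∈ (Finset.range w.length).powerset with RepSet w ⊆ s ∧ P (restrict w s), (-1) ^ s.card

theorem normalSum_concat (w : Word) (c : Bool) (P : Word → Prop) [DecidablePred P] :
    normalSum (w ++ [c]) P =
      (if w.getLast? = some c then 0 else normalSum w P) - normalSum w (fun x => P (x ++ [c])) := by
  simp only [normalSum, Finset.sum_filter, length_append, length_singleton, Finset.range_add_one]
  rw [Finset.sum_powerset_insert Finset.notMem_range_self, sub_eq_add_neg,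
    ← Finset.sum_neg_distrib]
  congr 1
  · split_ifs with hc
    · refine Finset.sum_eq_zero fun t ht => ?_
      simp [repSet_concat_subset_iff (Finset.mem_powerset.1 ht), hc]
    · refine Finset.sum_congr rfl fun t ht => ?_
      have ht := Finset.mem_powerset.1 ht
      simp only [repSet_concat_subset_iff ht, restrict_concat c ht, hc, ne_eq, not_false_eq_true,
        true_and]
  · refine Finset.sum_congr rfl fun t ht => ?_
    have ht := Finset.mem_powerset.1 ht
    simp only [repSet_concat_subset_insert_iff, restrict_concat_insert c ht,
      Finset.card_insert_of_notMem fun h => (Finset.mem_range.1 (ht h)).false, pow_succ]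
    split_ifs <;> simp

theorem normalSum_sublist (u w : Word) :
    normalSum w (u <+ ·) = if u = w then (-1) ^ w.length else 0 := by
  induction w using List.reverseRecOn generalizing u with
  | nil => simp [normalSum, Finset.sum_filter, restrict, RepSet]
  | append_singleton w c ih =>
    rw [normalSum_concat]
    by_cases hu : u.getLast? = some c
    · obtain ⟨u, rfl⟩ := getLast?_eq_some_iff.1 hu
      have hfirst : (if w.getLast? = some c then 0 else normalSum w (u ++ [c] <+ ·)) = 0 := by
        split_ifs with hw
        · rfl
        · rw [ih, if_neg]
          rintro rfl
          exact hw hu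
      simp_rw [append_sublist_append_right]
      rw [hfirst, ih, zero_sub]
      split_ifs <;> simp_all [pow_succ]
    · have hfirst :
          (if w.getLast? = some c then 0 else normalSum w (u <+ ·)) = normalSum w (u <+ ·) := by
        split_ifs with hw
        · rw [ih, if_neg]
          rintro rfl
          exact hu hw
        · rfl
      simp_rw [sublist_concat_iff_of_getLast?_ne hu]
      rw [hfirst, sub_self, if_neg]
      rintro rfl
      exact hu getLast?_concat

theorem nCount_eq_card (v w : Word) :
    nCount v w = ((Finset.range w.length).powerset.filter
      fun s => RepSet w ⊆ s ∧ restrict w s = v).card := by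
  rw [nCount, ← Nat.card_eq_finsetCard]
  exact Nat.card_congr <| Equiv.subtypeEquivRight fun s => by
    simp only [isEmb_iff, Finset.mem_filter, Finset.mem_powerset]
    tauto

theorem sum_nCount_eq_normalSum (u w : Word) :
    ∑ v ∈ w.sublists.toFinset.filter (fun v => u <+ v), (-1 : ℤ) ^ v.length * (nCount v w : ℤ) =
      normalSum w (u <+ ·) := by
  have hmaps : ∀ s ∈ (Finset.range w.length).powerset.filter
      (fun s => RepSet w ⊆ s ∧ u <+ restrict w s),
      restrict w s ∈ w.sublists.toFinset.filter (fun v => u <+ v) := by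
    intro s hs
    simp only [Finset.mem_filter, Finset.mem_powerset] at hs
    simpa using ⟨restrict_sublist hs.1, hs.2.2⟩
  rw [normalSum, ← Finset.sum_fiberwise_of_maps_to hmaps]
  refine Finset.sum_congr rfl fun v hv => ?_
  have huv := (Finset.mem_filter.1 hv).2
  rw [nCount_eq_card, Finset.filter_filter]
  have hfiber : ∀ s, (RepSet w ⊆ s ∧ u <+ restrict w s) ∧ restrict w s = v ↔
      RepSet w ⊆ s ∧ restrict w s = v :=
    fun s => ⟨fun ⟨⟨hR, _⟩, hs⟩ => ⟨hR, hs⟩, fun ⟨hR, hs⟩ => ⟨⟨hR, hs ▸ huv⟩, hs⟩⟩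
  simp_rw [hfiber]
  rw [Finset.sum_congr rfl fun s hs => by rw [← length_restrict, (Finset.mem_filter.1 hs).2.2],
    Finset.sum_const, nsmul_eq_mul, mul_comm]

end Word

theorem alternating_sum_nCount_general (u w : Word) (hne : u ≠ w) :
    ∑ v ∈ w.sublists.toFinset.filter (fun v => u <+ v),
      (-1 : ℤ) ^ v.length * (nCount v w : ℤ) = 0 := by
  rw [Word.sum_nCount_eq_normalSum, Word.normalSum_sublist, if_neg hne]

/-- The alternating sum of normal-embedding counts over an interval of the
subword order vanishes: `∑_{u ≤ v ≤ w} (-1)^{|v|} (w choose v)_n = 0` whenever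
`u < w`. -/
theorem alternating_sum_nCount (u w : Word) (h : u <+ w) (hne : u ≠ w) :
    ∑ v ∈ w.sublists.toFinset.filter (fun v => u <+ v),
      (-1 : ℤ) ^ v.length * (nCount v w : ℤ) = 0 :=
  alternating_sum_nCount_general u w hne
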